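/- arXiv:2008.06605 — 5 statements merged into one kernel-verified Lean document; each statement's English description precedes it below -/
import Mathlib

section
/- Let R be a ring in which the zero ideal is prime, and suppose the Jacobson radical of R is zero and the intersection I of all nonzero prime ideals of R is nonzero. Then R is a left primitive ring. -/
/-!
Since `J(R) = 0`, a nonzero element `x` of `I` lies outside some maximal left ideal `m`, and
`R ⧸ m` is a simple module. Its annihilator is a two-sided prime ideal contained in `m`; were it
nonzero it would contain `I`, hence `x`. So the annihilator is zero and `R ⧸ m` is faithful.
-/

universe u

/-- An ideal is two-sided if it is closed under right multiplication (ideals in Mathlib are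
left ideals). -/
def Ideal.IsTwoSided' {R : Type u} [Ring R] (P : Ideal R) : Prop :=
  ∀ a ∈ P, ∀ r : R, a * r ∈ P

def Ideal.IsPrimeNC {R : Type u} [Ring R] (P : Ideal R) : Prop :=
  P ≠ ⊤ ∧ ∀ a b : R, (∀ r : R, a * r * b ∈ P) → a ∈ P ∨ b ∈ P

theorem Ideal.exists_isMaximal_notMem_of_notMem_jacobson {R : Type*} [Ring R] {I : Ideal R}
    {x : R} (hx : x ∉ I.jacobson) : ∃ m : Ideal R, I ≤ m ∧ m.IsMaximal ∧ x ∉ m := by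
  simpa [jacobson, Submodule.mem_sInf, and_assoc] using hx

theorem Ideal.annihilator_quotient_le {R : Type*} [Ring R] (I : Ideal R) :
    Module.annihilator R (R ⧸ I) ≤ I := fun r hr => by
  simpa using (Submodule.Quotient.mk_eq_zero I).1
    (Module.mem_annihilator.1 hr (Submodule.Quotient.mk (1 : R)))

namespace Module

variable {R : Type u} {M : Type*} [Ring R] [AddCommGroup M] [Module R M]

theorem annihilator_isTwoSided' : (annihilator R M).IsTwoSided' := fun a ha r => by
  rw [mem_annihilator] at ha ⊢
  intro m
  rw [mul_smul, ha]

theorem annihilator_isPrimeNC [IsSimpleModule R M] : (annihilator R M).IsPrimeNC := by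
  refine ⟨?_, fun a b hab => or_iff_not_imp_right.2 fun hb => ?_⟩
  · rw [Ne, annihilator_eq_top_iff, not_subsingleton_iff_nontrivial]
    exact IsSimpleModule.nontrivial R M
  · obtain ⟨m, hm⟩ : ∃ m : M, b • m ≠ 0 := by simpa [mem_annihilator] using hb
    -- `b • m` generates `M`, so `a • M = a • R • b • m ⊆ (a * R * b) • m = 0`.
    refine mem_annihilator.2 fun n => ?_
    have hn : n ∈ Submodule.span R {b • m} := IsSimpleModule.span_singleton_eq_top R hm ▸ trivial
    obtain ⟨r, rfl⟩ := Submodule.mem_span_singleton.1 hn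
    rw [← mul_smul, ← mul_smul]
    exact mem_annihilator.1 (hab r) m

end Module

theorem primitive_of_jacobson_bot_of_inf_primes_ne_bot_general {R : Type u} [Ring R]
    (hjac : Ideal.jacobson (⊥ : Ideal R) = ⊥)
    (hI : sInf {Q : Ideal R | Q.IsTwoSided' ∧ Q.IsPrimeNC ∧ Q ≠ ⊥} ≠ ⊥) :
    ∃ (M : Type u) (_ : AddCommGroup M) (_ : Module R M),
      IsSimpleModule R M ∧ ∀ r : R, (∀ m : M, r • m = 0) → r = 0 := by
  obtain ⟨x, hxI, hx0⟩ := Submodule.exists_mem_ne_zero_of_ne_bot hI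
  obtain ⟨m, -, hm, hxm⟩ :=
    Ideal.exists_isMaximal_notMem_of_notMem_jacobson (I := ⊥) (by rwa [hjac, Submodule.mem_bot])
  have hsimple : IsSimpleModule R (R ⧸ m) := isSimpleModule_iff_isCoatom.2 hm.out
  have hfaithful : Module.annihilator R (R ⧸ m) = ⊥ := by
    by_contra hne
    have hI_le : sInf {Q : Ideal R | Q.IsTwoSided' ∧ Q.IsPrimeNC ∧ Q ≠ ⊥} ≤
        Module.annihilator R (R ⧸ m) :=
      sInf_le ⟨Module.annihilator_isTwoSided', Module.annihilator_isPrimeNC, hne⟩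
    exact hxm (Ideal.annihilator_quotient_le m (hI_le hxI))
  refine ⟨R ⧸ m, inferInstance, inferInstance, hsimple, fun r hr => ?_⟩
  exact (Submodule.eq_bot_iff _).1 hfaithful r (Module.mem_annihilator.2 hr)

/-- Let `R` be a ring in which the zero ideal is prime, the Jacobson radical of `R` is zero,
and the intersection of all nonzero prime (two-sided) ideals of `R` is nonzero.  Then `R` is a
left primitive ring, i.e. it admits a faithful simple left module. -/
theorem primitive_of_jacobson_bot_of_inf_primes_ne_bot {R : Type u} [Ring R]
    (hprime : Ideal.IsPrimeNC (⊥ : Ideal R))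
    (hjac : Ideal.jacobson (⊥ : Ideal R) = ⊥)
    (hI : sInf {Q : Ideal R | Q.IsTwoSided' ∧ Q.IsPrimeNC ∧ Q ≠ ⊥} ≠ ⊥) :
    ∃ (M : Type u) (_ : AddCommGroup M) (_ : Module R M),
      IsSimpleModule R M ∧ ∀ r : R, (∀ m : M, r • m = 0) → r = 0 :=
  primitive_of_jacobson_bot_of_inf_primes_ne_bot_general hjac hI
end

section
/- Let R be a ring and P a prime ideal. Then {P} is a locally closed subset of Spec(R) with the Zariski topology if and only if the intersection of all prime ideals properly containing P is strictly larger than P. -/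
universe u

/-- Let `P` be a prime ideal of `R`.  Then `{P}` is a locally closed subset of `Spec R` with
the Zariski topology — i.e. `{P}` is the intersection of a closed set `C_J = {Q : J ≤ Q}` and
an open set `C_I^c` for two-sided ideals `J, I` — if and only if the intersection of all prime
ideals properly containing `P` is strictly larger than `P`. -/
theorem singleton_locallyClosed_iff {R : Type u} [Ring R] (P : Ideal R)
    (h2 : P.IsTwoSided') (hp : P.IsPrimeNC) :
    (∃ J I : Ideal R, J.IsTwoSided' ∧ I.IsTwoSided' ∧
      ∀ Q : Ideal R, Q.IsTwoSided' → Q.IsPrimeNC → (Q = P ↔ (J ≤ Q ∧ ¬ I ≤ Q))) ↔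
    sInf {Q : Ideal R | Q.IsTwoSided' ∧ Q.IsPrimeNC ∧ P < Q} ≠ P := by
  constructor
  · rintro ⟨J, I, hJ, hI, hch⟩ hsinf
    obtain ⟨hJP, hIP⟩ := (hch P h2 hp).mp rfl
    rw [← hsinf, le_sInf_iff] at hIP
    push_neg at hIP
    obtain ⟨Q, ⟨hQ2, hQp, hPQ⟩, hIQ⟩ := hIP
    have hQeq := (hch Q hQ2 hQp).mpr ⟨le_trans hJP (le_of_lt hPQ), hIQ⟩
    exact absurd (hQeq ▸ hPQ) (lt_irrefl P)
  · intro hne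
    refine ⟨P, sInf {Q : Ideal R | Q.IsTwoSided' ∧ Q.IsPrimeNC ∧ P < Q}, h2, ?_, ?_⟩
    · intro a ha r
      rw [Ideal.mem_sInf] at ha ⊢
      intro Q hQ
      exact hQ.1 a (ha hQ) r
    · intro Q hQ2 hQp
      constructor
      · rintro rfl
        exact ⟨le_refl _, fun hle => hne (le_antisymm hle (le_sInf fun Q' hQ' => hQ'.2.2.le))⟩
      · rintro ⟨hPQ, hIQ⟩
        by_contra hne'
        exact hIQ (sInf_le ⟨hQ2, hQp, lt_of_le_of_ne hPQ (Ne.symm hne')⟩)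
end

section
/- Let R be a division ring such that for every x ∈ R there exists n(x) > 1 with x^{n(x)} = x. Then R is commutative (hence a field). -/
universe u

open Pointwise Polynomial

section helpers

variable {R : Type u} [DivisionRing R]

private lemma pow_reduce' {x : R} {n : ℕ} (hn : 1 < n) (hx : x ^ n = x) :
    ∀ m : ℕ, ∃ k < n, x ^ m = x ^ k := by
  intro m
  induction m using Nat.strong_induction_on with
  | _ m ih =>
    rcases lt_or_ge m n with hm | hm
    · exact ⟨m, hm, rfl⟩
    · obtain ⟨k, hk, hk2⟩ := ih (m - n + 1) (by omega)
      refine ⟨k, hk, ?_⟩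
      have h1 : m = (m - n) + n := by omega
      rw [h1, pow_add, hx, ← pow_succ, hk2]

private lemma conj_pow_eq' {b : R} (hb : b ≠ 0) (z : R) :
    ∀ i : ℕ, b * z ^ i * b⁻¹ = (b * z * b⁻¹) ^ i := by
  intro i
  induction i with
  | zero => simp [mul_inv_cancel₀ hb]
  | succ i ih =>
    rw [pow_succ, pow_succ, ← ih]
    simp only [mul_assoc, inv_mul_cancel_left₀ hb]

private def spanSubring (p : ℕ) [Algebra (ZMod p) R] (S : Set R)
    (h1 : (1:R) ∈ S) (hmul : S * S ⊆ S) : Subring R where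
  carrier := Submodule.span (ZMod p) S
  one_mem' := Submodule.subset_span h1
  zero_mem' := Submodule.zero_mem _
  add_mem' := fun hx hy => Submodule.add_mem _ hx hy
  neg_mem' := fun hx => Submodule.neg_mem _ hx
  mul_mem' := fun {x y} hx hy => by
    have hxy : x * y ∈ Submodule.span (ZMod p) S * Submodule.span (ZMod p) S :=
      Submodule.mul_mem_mul hx hy
    have h2 : Submodule.span (ZMod p) S * Submodule.span (ZMod p) S ≤
        Submodule.span (ZMod p) S := by
      rw [Submodule.span_mul_span]
      exact Submodule.span_le.mpr (hmul.trans Submodule.subset_span)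
    exact h2 hxy

private lemma mem_spanSubring {p : ℕ} [Algebra (ZMod p) R] {S : Set R}
    {h1 : (1:R) ∈ S} {hmul : S * S ⊆ S} {x : R} (hx : x ∈ S) :
    x ∈ spanSubring p S h1 hmul :=
  Submodule.subset_span hx

private lemma mem_spanSubring_iff {p : ℕ} [Algebra (ZMod p) R] {S : Set R}
    {h1 : (1:R) ∈ S} {hmul : S * S ⊆ S} {x : R} :
    x ∈ spanSubring p S h1 hmul ↔ x ∈ Submodule.span (ZMod p) S :=
  Iff.rfl

private lemma spanSubring_finite (p : ℕ) [Fact p.Prime] [Algebra (ZMod p) R] {S : Set R}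
    (hS : S.Finite) (h1 : (1:R) ∈ S) (hmul : S * S ⊆ S) :
    Finite (spanSubring p S h1 hmul) := by
  have h2 : Module.Finite (ZMod p) (Submodule.span (ZMod p) S) :=
    Module.Finite.span_of_finite _ hS
  have h3 : Finite (Submodule.span (ZMod p) S) := Module.finite_of_finite (ZMod p)
  exact h3

end helpers

set_option maxHeartbeats 1000000 in
set_option synthInstance.maxHeartbeats 400000 in
/-- A division ring in which every element `x` satisfies `x^{n(x)} = x` for some integer
`n(x) > 1` is commutative (hence a field). -/
theorem divisionRing_pow_eq_self_comm {R : Type u} [DivisionRing R]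
    (h : ∀ x : R, ∃ n : ℕ, 1 < n ∧ x ^ n = x) :
    ∀ a b : R, a * b = b * a := by
  by_contra hcomm
  push_neg at hcomm
  obtain ⟨a, b₀, hab₀⟩ := hcomm
  -- the characteristic is a prime `p`
  have hCharP : CharP R (ringChar R) := ringChar.charP R
  have hp : (ringChar R).Prime := by
    rcases CharP.char_is_prime_or_zero R (ringChar R) with hp | hp
    · exact hp
    · exfalso
      rw [hp] at hCharP
      haveI := hCharP
      haveI : CharZero R := CharP.charP_to_charZero R
      obtain ⟨n, hn, h2⟩ := h (2 : R)
      have h3 : ((2 ^ n : ℕ) : R) = ((2 : ℕ) : R) := by push_cast; exact h2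
      rw [Nat.cast_inj] at h3
      have h4 : 2 ^ 1 < 2 ^ n := Nat.pow_lt_pow_right one_lt_two hn
      omega
  set p := ringChar R with hpdef
  haveI : Fact p.Prime := ⟨hp⟩
  letI : Algebra (ZMod p) R := ZMod.algebra R p
  -- the finite subfield generated by `a`
  obtain ⟨n, hn, han⟩ := h a
  set PS : Set R := Set.range (fun i : Fin n => a ^ (i : ℕ)) with hPSdef
  have hPS1 : (1:R) ∈ PS := ⟨⟨0, by omega⟩, by simp⟩
  have hPSmul : PS * PS ⊆ PS := by
    rintro z ⟨x, ⟨i, rfl⟩, y, ⟨j, rfl⟩, rfl⟩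
    obtain ⟨k, hk, hk2⟩ := pow_reduce' hn han ((i : ℕ) + (j : ℕ))
    exact ⟨⟨k, hk⟩, by simp [← pow_add, ← hk2]⟩
  set K : Subring R := spanSubring p PS hPS1 hPSmul with hKdef
  have haK : a ∈ K := mem_spanSubring ⟨⟨1, hn⟩, by simp⟩
  haveI hKfin : Finite K := spanSubring_finite p (Set.finite_range _) hPS1 hPSmul
  have hcommK : ∀ z ∈ K, Commute z a := by
    intro z hz
    rw [mem_spanSubring_iff] at hz
    induction hz using Submodule.span_induction with
    | mem x hx => obtain ⟨i, rfl⟩ := hx; exact Commute.pow_left rfl i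
    | zero => exact Commute.zero_left a
    | add x y hx hy ihx ihy => exact ihx.add_left ihy
    | smul c x hx ihx =>
      show (c • x) * a = a * (c • x)
      rw [smul_mul_assoc, mul_smul_comm, ihx.eq]
  have hKcomm : ∀ z ∈ K, ∀ w ∈ K, Commute z w := by
    intro z hz w hw
    have hAw : Commute a w := (hcommK w hw).symm
    rw [mem_spanSubring_iff] at hz
    induction hz using Submodule.span_induction with
    | mem x hx => obtain ⟨i, rfl⟩ := hx; exact hAw.pow_left i
    | zero => exact Commute.zero_left w
    | add x y hx hy ihx ihy => exact ihx.add_left ihy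
    | smul c x hx ihx =>
      show (c • x) * w = w * (c • x)
      rw [smul_mul_assoc, mul_smul_comm, ihx.eq]
  -- `K` is a finite field
  letI : Field K := (Finite.isDomain_to_isField K).toField
  haveI : Fintype K := Fintype.ofFinite K
  haveI : CharP K p := CharP.subring R p K
  -- `R` is a `K`-vector space via left multiplication
  letI : Module K R := Module.compHom R K.subtype
  have hsmul : ∀ (k : K) (y : R), k • y = (k : R) * y := fun k y => rfl
  haveI : Nontrivial (Module.End K R) := by
    refine ⟨1, 0, fun h0 => one_ne_zero (α := R) ?_⟩
    have := DFunLike.congr_fun h0 (1 : R)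
    rwa [Module.End.one_apply, LinearMap.zero_apply] at this
  haveI : CharP (Module.End K R) p :=
    charP_of_injective_algebraMap (algebraMap K (Module.End K R)).injective p
  -- the inner derivation
  have hLsmul : ∀ (k : K) (y : R), a * ((k : R) * y) = (k : R) * (a * y) := by
    intro k y
    rw [← mul_assoc, ← mul_assoc, (hcommK (k : R) k.2).eq]
  let L : Module.End K R :=
    { toFun := fun y => a * y
      map_add' := fun x y => mul_add a x y
      map_smul' := fun k y => by simp only [RingHom.id_apply, hsmul]; exact hLsmul k y }
  let Rr : Module.End K R :=
    { toFun := fun y => y * a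
      map_add' := fun x y => add_mul x y a
      map_smul' := fun k y => by simp only [RingHom.id_apply, hsmul, mul_assoc] }
  set d : Module.End K R := L - Rr with hddef
  have hdapp : ∀ y : R, d y = a * y - y * a := fun y => rfl
  have hdne : d ≠ 0 := by
    intro h0
    apply hab₀
    have := DFunLike.congr_fun h0 b₀
    rw [hdapp, LinearMap.zero_apply, sub_eq_zero] at this
    exact this
  have hLpow : ∀ (m : ℕ) (y : R), (L ^ m) y = a ^ m * y := by
    intro m
    induction m with
    | zero => intro y; simp
    | succ m ih => intro y; rw [pow_succ, Module.End.mul_apply, ih]; show a ^ m * (a * y) = _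
                   rw [← mul_assoc, ← pow_succ]
  have hRpow : ∀ (m : ℕ) (y : R), (Rr ^ m) y = y * a ^ m := by
    intro m
    induction m with
    | zero => intro y; simp
    | succ m ih => intro y; rw [pow_succ, Module.End.mul_apply]; show (Rr ^ m) (y * a) = _
                   rw [ih, mul_assoc, ← pow_succ']
  obtain ⟨m, -, hq⟩ := FiniteField.card K p
  have haq : a ^ (Fintype.card K) = a := by
    have h1 := FiniteField.pow_card (⟨a, haK⟩ : K)
    have h2 := congrArg (Subtype.val) h1
    push_cast at h2
    exact h2
  have hdq : d ^ (Fintype.card K) = d := by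
    have hLR : Commute L Rr := by
      ext y
      show a * (y * a) = (a * y) * a
      rw [mul_assoc]
    have h1 : (L - Rr) ^ p ^ (m : ℕ) = L ^ p ^ (m : ℕ) - Rr ^ p ^ (m : ℕ) :=
      sub_pow_char_pow_of_commute (p := p) (n := (m : ℕ)) hLR
    rw [hddef, hq, h1, ← hq]
    ext y
    rw [LinearMap.sub_apply, LinearMap.sub_apply, hLpow, hRpow, haq]
    rfl
  -- the product of (d - λ) over all λ in K is zero
  classical
  set f : K → Module.End K R := fun lam => d - algebraMap K (Module.End K R) lam with hfdef
  have hf0 : f 0 = d := by rw [hfdef]; simp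
  have hfcomm : ∀ u w : K, Commute (f u) (f w) := by
    intro u w
    have c1 : Commute d (f w) :=
      (Commute.refl d).sub_right (Algebra.commute_algebraMap_right w d)
    have c2 : Commute (algebraMap K (Module.End K R) u) (f w) :=
      (Algebra.commute_algebraMap_left u d).sub_right
        ((Commute.all u w).map (algebraMap K (Module.End K R)))
    exact c1.sub_left c2
  set lst : List K := Finset.univ.toList with hlstdef
  have hlst0 : (0:K) ∈ lst := by rw [hlstdef]; simp
  have hprodL : (lst.map f).prod = 0 := by
    have hmonic : (X ^ (Fintype.card K) - X : K[X]).Monic := by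
      apply Polynomial.monic_X_pow_sub
      rw [Polynomial.degree_X]
      exact_mod_cast Fintype.one_lt_card
    have hcards : ((X ^ (Fintype.card K) - X : K[X]).roots).card
        = (X ^ (Fintype.card K) - X : K[X]).natDegree := by
      rw [FiniteField.roots_X_pow_card_sub_X,
        FiniteField.X_pow_card_sub_X_natDegree_eq K Fintype.one_lt_card]
      exact Finset.card_univ
    have h1 := Polynomial.prod_multiset_X_sub_C_of_monic_of_roots_card_eq hmonic hcards
    rw [FiniteField.roots_X_pow_card_sub_X] at h1
    have huv : (Finset.univ : Finset K).val = (↑lst : Multiset (↥K)) := by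
      rw [hlstdef, Finset.toList, Multiset.coe_toList]
    rw [huv, Multiset.map_coe, Multiset.prod_coe] at h1
    have h2 := congrArg (Polynomial.aeval d) h1
    rw [map_list_prod, List.map_map] at h2
    have h3 : (⇑(Polynomial.aeval d) ∘ fun lam : K => X - Polynomial.C lam) = f := by
      funext lam
      rw [hfdef]
      simp [Polynomial.aeval_C]
    rw [h3, map_sub, map_pow, Polynomial.aeval_X, hdq, sub_self] at h2
    exact h2
  -- extract an eigenvector with a nonzero eigenvalue
  have hexist : ∃ lam : K, lam ≠ 0 ∧
      ¬ Function.Injective ⇑(d - algebraMap K (Module.End K R) lam) := by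
    by_contra hno
    push_neg at hno
    have hperm : List.Perm lst (lst.erase 0 ++ [0]) :=
      (List.perm_cons_erase hlst0).trans (List.perm_append_singleton 0 (lst.erase 0)).symm
    have hpair : (lst.map f).Pairwise Commute := by
      apply List.pairwise_of_forall_mem_list
      intro x hx y hy
      obtain ⟨u, -, rfl⟩ := List.mem_map.mp hx
      obtain ⟨w, -, rfl⟩ := List.mem_map.mp hy
      exact hfcomm u w
    have hpeq : (lst.map f).prod = ((lst.erase 0).map f).prod * d := by
      rw [List.Perm.prod_eq' (hperm.map f) hpair]
      rw [List.map_append, List.prod_append]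
      simp [hf0]
    have h0 : ((lst.erase 0).map f).prod * d = 0 := by rw [← hpeq, hprodL]
    have hPinj : Function.Injective ⇑(((lst.erase 0).map f).prod) := by
      apply List.prod_induction (fun g : Module.End K R => Function.Injective ⇑g)
      · intro g1 g2 hg1 hg2
        rw [Module.End.mul_eq_comp, LinearMap.coe_comp]
        exact hg1.comp hg2
      · intro x y e
        simpa using e
      · intro g hg
        obtain ⟨lam, hlam, rfl⟩ := List.mem_map.mp hg
        have hlamne : lam ≠ 0 := (((Finset.nodup_toList _).mem_erase_iff).mp hlam).1
        exact hno lam hlamne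
    apply hdne
    ext y
    have h5 := DFunLike.congr_fun h0 y
    rw [Module.End.mul_apply, LinearMap.zero_apply] at h5
    rw [LinearMap.zero_apply]
    exact hPinj (h5.trans (map_zero _).symm)
  obtain ⟨lam, hlam0, hlaminj⟩ := hexist
  have hkerne : LinearMap.ker (d - algebraMap K (Module.End K R) lam) ≠ ⊥ := by
    intro hbot
    exact hlaminj (LinearMap.ker_eq_bot.mp hbot)
  obtain ⟨v, hvker, hv0⟩ := (Submodule.ne_bot_iff _).mp hkerne
  rw [LinearMap.mem_ker, LinearMap.sub_apply, sub_eq_zero, Module.algebraMap_end_apply,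
    hsmul] at hvker
  have hvev : a * v - v * a = (lam : R) * v := by rw [← hvker, hdapp]
  set μ : R := (lam : R) with hμdef
  have hμ0 : μ ≠ 0 := fun hh => hlam0 (Subtype.ext hh)
  have hμK : μ ∈ K := lam.2
  have hb0 : v ≠ 0 := hv0
  have hba : v * a = a * v - μ * v := by rw [← hvev, sub_sub_cancel]
  have hbab : v * a * v⁻¹ = a - μ := by
    rw [hba, ← sub_mul, mul_assoc, mul_inv_cancel₀ hb0, mul_one]
  -- conjugation by v maps K into K
  have hconjK : ∀ z ∈ K, v * z * v⁻¹ ∈ K := by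
    intro z hz
    rw [mem_spanSubring_iff] at hz
    induction hz using Submodule.span_induction with
    | mem x hx =>
      obtain ⟨i, rfl⟩ := hx
      rw [conj_pow_eq' hb0, hbab]
      exact pow_mem (sub_mem haK hμK) _
    | zero => simpa using K.zero_mem
    | add x y hx hy ihx ihy =>
      have he : v * (x + y) * v⁻¹ = v * x * v⁻¹ + v * y * v⁻¹ := by
        rw [mul_add, add_mul]
      rw [he]
      exact K.add_mem ihx ihy
    | smul c x hx ihx =>
      have he : v * (c • x) * v⁻¹ = c • (v * x * v⁻¹) := by
        rw [mul_smul_comm, smul_mul_assoc]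
      rw [he]
      exact mem_spanSubring_iff.mpr (Submodule.smul_mem _ c (mem_spanSubring_iff.mp ihx))
  have hconjKpow : ∀ (j : ℕ), ∀ z ∈ K, ∃ w ∈ K, v ^ j * z = w * v ^ j := by
    intro j
    induction j with
    | zero => exact fun z hz => ⟨z, hz, by simp⟩
    | succ j ih =>
      intro z hz
      obtain ⟨w, hw, hww⟩ := ih (v * z * v⁻¹) (hconjK z hz)
      refine ⟨w, hw, ?_⟩
      calc v ^ (j+1) * z = v ^ j * (v * z) := by rw [pow_succ, mul_assoc]
        _ = v ^ j * (v * z * (v⁻¹ * v)) := by rw [inv_mul_cancel₀ hb0, mul_one]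
        _ = v ^ j * (v * z * v⁻¹) * v := by simp only [mul_assoc]
        _ = w * v ^ j * v := by rw [hww]
        _ = w * v ^ (j+1) := by rw [mul_assoc, ← pow_succ]
  -- the finite subring generated by K and v
  obtain ⟨s, hs, hbs⟩ := h v
  set S2 : Set R := (K : Set R) * ((fun j : ℕ => v ^ j) '' Set.Iio s) with hS2def
  have hS21 : (1:R) ∈ S2 :=
    ⟨1, K.one_mem, 1, ⟨0, Set.mem_Iio.mpr (by omega), pow_zero v⟩, mul_one 1⟩
  have hS2mul : S2 * S2 ⊆ S2 := by
    rintro t ⟨x, ⟨k1, hk1, x2, ⟨j1, hj1, rfl⟩, rfl⟩, y, ⟨k2, hk2, y2, ⟨j2, hj2, rfl⟩, rfl⟩, rfl⟩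
    obtain ⟨w, hwK, hww⟩ := hconjKpow j1 k2 hk2
    obtain ⟨r, hr, hrr⟩ := pow_reduce' hs hbs (j1 + j2)
    refine ⟨k1 * w, K.mul_mem hk1 hwK, v ^ r, ⟨r, hr, rfl⟩, ?_⟩
    calc k1 * w * v ^ r = k1 * w * v ^ (j1 + j2) := by rw [← hrr]
      _ = k1 * (w * v ^ j1) * v ^ j2 := by rw [pow_add]; simp only [mul_assoc]
      _ = k1 * (v ^ j1 * k2) * v ^ j2 := by rw [hww]
      _ = k1 * v ^ j1 * (k2 * v ^ j2) := by simp only [mul_assoc]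
  have hS2fin : S2.Finite :=
    Set.Finite.mul (Set.toFinite _) ((Set.finite_Iio s).image _)
  set D : Subring R := spanSubring p S2 hS21 hS2mul with hDdef
  haveI : Finite D := spanSubring_finite p hS2fin hS21 hS2mul
  have hDfield : IsField D := Finite.isDomain_to_isField D
  have haD : a ∈ D := mem_spanSubring
    ⟨a, haK, 1, ⟨0, Set.mem_Iio.mpr (by omega), pow_zero v⟩, mul_one a⟩
  have hvD : v ∈ D := mem_spanSubring ⟨1, K.one_mem, v, ⟨1, hs, pow_one v⟩, one_mul v⟩
  have hav : a * v = v * a := by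
    have h9 := hDfield.mul_comm ⟨a, haD⟩ ⟨v, hvD⟩
    simpa using congrArg Subtype.val h9
  have hz : μ * v = 0 := by
    have h7 : a * v - μ * v = a * v := by rw [← hba, ← hav]
    exact sub_eq_self.mp h7
  rcases mul_eq_zero.mp hz with h8 | h8
  · exact hμ0 h8
  · exact hb0 h8
end

section
/- Jacobson density theorem: Let R be a ring, M a simple left R-module, and Δ = End_R(M). If v_1, ..., v_m ∈ M are Δ-linearly independent and w_1, ..., w_m ∈ M are arbitrary, then there exists r ∈ R with r·v_i = w_i for all i. -/
universe u v

theorem LinearIndependent.exists_linearMap_apply_eq {K V W ι : Type*} [DivisionRing K]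
    [AddCommGroup V] [Module K V] [AddCommGroup W] [Module K W] {v : ι → V}
    (hv : LinearIndependent K v) (w : ι → W) :
    ∃ f : V →ₗ[K] W, ∀ i, f (v i) = w i := by
  obtain ⟨f, hf⟩ := LinearMap.exists_extend (Finsupp.linearCombination K w ∘ₗ hv.repr)
  refine ⟨f, fun i => ?_⟩
  have := LinearMap.congr_fun hf ⟨v i, Submodule.subset_span (Set.mem_range_self i)⟩
  simpa [hv.repr_eq_single i] using this

namespace SimpleModuleStatement

/-- Jacobson density theorem: let `M` be a simple left `R`-module and `Δ = End_R(M)`.  If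
`v₁, …, vₘ ∈ M` are `Δ`-linearly independent and `w₁, …, wₘ ∈ M` are arbitrary, then there is
some `r ∈ R` with `r • vᵢ = wᵢ` for all `i`. -/
theorem jacobson_density {R : Type u} {M : Type v} [Ring R] [AddCommGroup M] [Module R M]
    (hM : IsSimpleModule R M) {m : ℕ} (v : Fin m → M)
    (hv : LinearIndependent (Module.End R M) v) (w : Fin m → M) :
    ∃ r : R, ∀ i : Fin m, r • v i = w i := by
  classical
  obtain ⟨f, hf⟩ := hv.exists_linearMap_apply_eq w
  obtain ⟨r, hr⟩ := _root_.jacobson_density f (Finset.univ.image v)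
  exact ⟨r, fun i => (hr (v i) (by simp)).symm.trans (hf i)⟩

end SimpleModuleStatement
end

section
/- Let A be a Poisson algebra over a field k of characteristic zero, and let I be a Poisson ideal. Then every minimal prime ideal over I is a Poisson ideal. -/
universe u v

/-- A Poisson bracket on a commutative `k`-algebra `A`. -/
structure IsPoissonBracket (k : Type u) {A : Type v} [CommRing k] [CommRing A] [Algebra k A]
    (B : A → A → A) : Prop where
  add_left : ∀ a b c : A, B (a + b) c = B a c + B b c
  smul_left : ∀ (c : k) (a b : A), B (c • a) b = c • B a b
  antisymm : ∀ a b : A, B a b = - B b a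
  jacobi : ∀ a b c : A, B a (B b c) + B b (B c a) + B c (B a b) = 0
  leibniz : ∀ a b c : A, B (a * b) c = B a c * b + a * B b c

/-!
For fixed `g`, `D = {·, g}` is a derivation preserving `I`. If `f ∈ P`, minimality of `P`
gives `s ∉ P` and `n` with `s fⁿ ∈ I`. Modulo `f`, the `n`-th iterate `Dⁿ (s fⁿ) ∈ I ⊆ P` is
`n! s (D f)ⁿ`, and `n!` is a unit in characteristic zero, so primality of `P` gives `D f ∈ P`.
-/

theorem Ideal.exists_mul_pow_mem_of_mem_minimalPrimes {R : Type*} [CommSemiring R]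
    {I P : Ideal R} (hP : P ∈ I.minimalPrimes) {x : R} (hx : x ∈ P) :
    ∃ s ∉ P, ∃ n : ℕ, s * x ^ n ∈ I := by
  have := hP.isPrime
  by_contra! h
  have hdisj : Disjoint (I : Set R) (P.primeCompl ⊔ Submonoid.powers x : Submonoid R) := by
    refine Set.disjoint_left.mpr fun y hyI hy ↦ ?_
    obtain ⟨s, hs, _, ⟨n, rfl⟩, rfl⟩ := Submonoid.mem_sup.mp hy
    exact h s hs n hyI
  obtain ⟨Q, hQ, hIQ, hQdisj⟩ := Ideal.exists_le_prime_disjoint I _ hdisj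
  have hQP : Q ≤ P := fun y hyQ ↦ by_contra fun hyP ↦
    Set.disjoint_left.mp hQdisj hyQ (Submonoid.mem_sup_left (show y ∈ P.primeCompl from hyP))
  exact Set.disjoint_left.mp hQdisj (hP.2 ⟨hQ, hIQ⟩ hQP hx)
    (Submonoid.mem_sup_right (Submonoid.mem_powers x))

namespace Derivation

variable {R A : Type*} [CommSemiring R] [CommRing A] [Algebra R A] (D : Derivation R A A)

theorem map_mul_pow_succ (x a : A) (n : ℕ) :
    D (x * a ^ (n + 1)) = a ^ (n + 1) * D x + (n + 1) • (x * a ^ n * D a) := by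
  rw [leibniz, leibniz_pow, smul_eq_mul, smul_eq_mul, Nat.add_sub_cancel, smul_eq_mul]
  ring

theorem pow_succ_dvd_iterate_mul_pow_sub (s a : A) (m r : ℕ) :
    a ^ (r + 1) ∣ D^[m] (s * a ^ (r + m)) - (r + 1).ascFactorial m • (s * a ^ r * D a ^ m) := by
  induction m generalizing r with
  | zero => simp
  | succ m ih =>
    obtain ⟨y, hy⟩ := ih (r + 1)
    have hiter : D^[m] (s * a ^ (r + (m + 1))) =
        (r + 2).ascFactorial m • (s * D a ^ m * a ^ (r + 1)) + y * a ^ (r + 1 + 1) := by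
      rw [show r + (m + 1) = r + 1 + m by omega]
      linear_combination hy
    have hcoeff : (r + 1).ascFactorial (m + 1) = (r + 1) * (r + 2).ascFactorial m := by
      rw [Nat.ascFactorial_succ, Nat.succ_ascFactorial]
    refine ⟨(r + 2).ascFactorial m • D (s * D a ^ m) + (a * D y + (r + 2) • (y * D a)), ?_⟩
    rw [Function.iterate_succ_apply', hiter, map_add, map_nsmul, map_mul_pow_succ,
      map_mul_pow_succ, hcoeff]
    ring

theorem map_mem_of_mem_minimalPrimes [Algebra ℚ A] {I P : Ideal A}
    (hI : ∀ x ∈ I, D x ∈ I) (hP : P ∈ I.minimalPrimes) {f : A} (hf : f ∈ P) : D f ∈ P := by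
  have hPrime := hP.isPrime
  obtain ⟨s, hs, n, hsf⟩ := Ideal.exists_mul_pow_mem_of_mem_minimalPrimes hP hf
  have hiter : D^[n] (s * f ^ n) ∈ P := hP.le (Set.MapsTo.iterate hI n hsf)
  have hdvd := D.pow_succ_dvd_iterate_mul_pow_sub s f n 0
  rw [zero_add, zero_add, pow_one, pow_zero, mul_one, Nat.one_ascFactorial] at hdvd
  have hmem : n.factorial • (s * D f ^ n) ∈ P := by
    simpa using P.sub_mem hiter (P.mem_of_dvd hdvd hf)
  have hfact : (n.factorial : A) ∉ P := fun h ↦ hPrime.ne_top <| P.eq_top_of_isUnit_mem h <| by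
    simpa using (IsUnit.mk0 (n.factorial : ℚ) (by positivity)).map (algebraMap ℚ A)
  rw [nsmul_eq_mul] at hmem
  have hDf := (hPrime.mem_or_mem hmem).resolve_left hfact
  exact hPrime.mem_of_pow_mem n ((hPrime.mem_or_mem hDf).resolve_left hs)

end Derivation

namespace IsPoissonBracket

variable {k A : Type*} [CommRing k] [CommRing A] [Algebra k A] {B : A → A → A}

def derivationLeft (hB : IsPoissonBracket k B) (g : A) : Derivation k A A :=
  Derivation.mk'
    { toFun := fun x ↦ B x g
      map_add' := fun x y ↦ hB.add_left x y g
      map_smul' := fun c x ↦ hB.smul_left c x g }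
    fun x y ↦ by simp only [LinearMap.coe_mk, AddHom.coe_mk, smul_eq_mul, hB.leibniz]; ring

end IsPoissonBracket

/-- Let `A` be a Poisson algebra over a field `k` of characteristic zero and let `I` be a
Poisson ideal.  Then every minimal prime ideal over `I` is a Poisson ideal. -/
theorem minimal_prime_over_poisson_ideal_is_poisson {k : Type u} {A : Type v} [Field k]
    [CharZero k] [CommRing A] [Algebra k A] (B : A → A → A) (hB : IsPoissonBracket k B)
    (I : Ideal A) (hI : ∀ f ∈ I, ∀ g : A, B f g ∈ I)
    (P : Ideal A) (hP : P ∈ I.minimalPrimes) :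
    ∀ f ∈ P, ∀ g : A, B f g ∈ P := by
  intro f hf g
  let : Algebra ℚ A := ((algebraMap k A).comp (algebraMap ℚ k)).toAlgebra
  exact (hB.derivationLeft g).map_mem_of_mem_minimalPrimes (fun x hx ↦ hI x hx g) hP hf
end
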